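/- arXiv:2202.12125 — 2 statements merged into one kernel-verified Lean document; each statement's English description precedes it below -/
import Mathlib

section
/- Let k ≥ 3 be a natural number and let x ∈ (0, 1/2]. Then |H(x,k)| > (1/((2k+1)(2k+2)))·|H(x,k+1)|. -/
open Real

/-- H(x,k) = -(1-x)²·3^{2k} + (1+x)(3-2x)^{2k} - (1+x)(3-x) + (3-x)(1-2x)^{2k} -/
noncomputable def H (x : ℝ) (k : ℕ) : ℝ :=
  -(1 - x)^2 * 3^(2*k) + (1 + x) * (3 - 2*x)^(2*k) - (1 + x) * (3 - x)
    + (3 - x) * (1 - 2*x)^(2*k)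

lemma poly_key (x : ℝ) (hx0 : 0 < x) (hx1 : x ≤ 1/2) :
    (1 + x) * (3 + 3*x - x^2) * (3 - 2*x)^6 ≤ 2187 * (1 - x)^2 := by
  nlinarith [mul_nonneg (pow_nonneg (show (0:ℝ) ≤ 1/2 - x by linarith) 3) hx0.le,
    mul_nonneg (pow_nonneg (show (0:ℝ) ≤ 1/2 - x by linarith) 4) hx0.le,
    mul_nonneg (pow_nonneg (show (0:ℝ) ≤ 1/2 - x by linarith) 5) hx0.le,
    mul_nonneg (pow_nonneg (show (0:ℝ) ≤ 1/2 - x by linarith) 6) hx0.le,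
    mul_nonneg (mul_nonneg hx0.le hx0.le) (show (0:ℝ) ≤ 1/2 - x by linarith),
    sq_nonneg x, mul_pos hx0 hx0]

lemma pow_fact_b (x : ℝ) (k : ℕ) (hk : 3 ≤ k) (hx0 : 0 < x) (hx1 : x ≤ 1/2) :
    729 * (3 - 2*x)^(2*k) ≤ (3:ℝ)^(2*k) * (3 - 2*x)^6 := by
  obtain ⟨j, rfl⟩ : ∃ j, k = 3 + j := ⟨k - 3, by omega⟩
  have h1 : (0:ℝ) < 3 - 2*x := by linarith
  have hle : (3 - 2*x)^(2*j) ≤ (3:ℝ)^(2*j) := pow_le_pow_left₀ (by linarith) (by linarith) _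
  have hp : (0:ℝ) ≤ (3-2*x)^6 := pow_nonneg h1.le 6
  have e1 : (3 - 2*x)^(2*(3+j)) = (3-2*x)^(2*j) * (3-2*x)^6 := by
    rw [show 2*(3+j) = 2*j + 6 by ring, pow_add]
  have e2 : (3:ℝ)^(2*(3+j)) = 729 * (3:ℝ)^(2*j) := by
    rw [show 2*(3+j) = 6 + 2*j by ring, pow_add]; norm_num
  rw [e1, e2]
  nlinarith [mul_le_mul_of_nonneg_right hle hp]

lemma pow_fact_c (x : ℝ) (k : ℕ) (hk : 3 ≤ k) (hx0 : 0 < x) (hx1 : x ≤ 1/2) :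
    (1 - 2*x)^(2*k) ≤ (1 - 2*x)^2 := by
  apply pow_le_pow_of_le_one (by linarith) (by linarith) (by omega)

lemma H_neg (k : ℕ) (hk : 3 ≤ k) (x : ℝ) (hx0 : 0 < x) (hx1 : x ≤ 1/2) :
    H x k < 0 := by
  have ha : (0:ℝ) < 3^(2*k) := by positivity
  have hb : (0:ℝ) < (3 - 2*x)^(2*k) := pow_pos (by linarith) _
  have hc : (0:ℝ) ≤ (1 - 2*x)^(2*k) := pow_nonneg (by linarith) _
  have fb := pow_fact_b x k hk hx0 hx1
  have fc := pow_fact_c x k hk hx0 hx1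
  have hp := poly_key x hx0 hx1
  have h6 : (0:ℝ) ≤ (3-2*x)^6 := pow_nonneg (by linarith) 6
  have h729 : (1 + x) * (3 - 2*x)^6 ≤ 729 * (1 - x)^2 := by
    nlinarith [mul_nonneg (mul_nonneg (show (0:ℝ) ≤ 1+x by linarith) h6)
      (show (0:ℝ) ≤ 3*x - x^2 by nlinarith)]
  unfold H
  nlinarith [mul_le_mul_of_nonneg_left fb (show (0:ℝ) ≤ 1 + x by linarith),
    mul_le_mul_of_nonneg_left h729 (le_of_lt ha),
    mul_le_mul_of_nonneg_left fc (show (0:ℝ) ≤ 3 - x by linarith)]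

lemma H_key (k : ℕ) (hk : 3 ≤ k) (x : ℝ) (hx0 : 0 < x) (hx1 : x ≤ 1/2) :
    21 * H x k < H x (k+1) := by
  have ha : (0:ℝ) < 3^(2*k) := by positivity
  have hb : (0:ℝ) < (3 - 2*x)^(2*k) := pow_pos (by linarith) _
  have hc : (0:ℝ) ≤ (1 - 2*x)^(2*k) := pow_nonneg (by linarith) _
  have fb := pow_fact_b x k hk hx0 hx1
  have fc := pow_fact_c x k hk hx0 hx1
  have hp := poly_key x hx0 hx1
  have e1 : (3:ℝ)^(2*(k+1)) = 9 * 3^(2*k) := by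
    rw [show 2*(k+1) = 2*k+2 by ring, pow_add]; ring
  have e2 : (3 - 2*x)^(2*(k+1)) = (3-2*x)^2 * (3-2*x)^(2*k) := by
    rw [show 2*(k+1) = 2*k+2 by ring, pow_add]; ring
  have e3 : (1 - 2*x)^(2*(k+1)) = (1-2*x)^2 * (1-2*x)^(2*k) := by
    rw [show 2*(k+1) = 2*k+2 by ring, pow_add]; ring
  have hA : 4 * ((1+x)*(3+3*x-x^2)) * (3 - 2*x)^(2*k) ≤ 12 * (1-x)^2 * 3^(2*k) := by
    have h1 : (0:ℝ) < (1+x)*(3+3*x-x^2) := by nlinarith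
    have := mul_le_mul_of_nonneg_left fb (le_of_lt h1)
    nlinarith [mul_le_mul_of_nonneg_left hp (le_of_lt ha)]
  have hB : 4 * (3-x) * ((5+x-x^2) * (1-2*x)^(2*k)) < 20 * (1+x) * (3-x) := by
    have h5 : (0:ℝ) < 5+x-x^2 := by nlinarith
    have h2 := mul_le_mul_of_nonneg_left fc (le_of_lt h5)
    have h3 : (0:ℝ) ≤ 4*(3-x) := by linarith
    have h4 := mul_le_mul_of_nonneg_left h2 h3
    have h6 : 4 * (3-x) * ((5+x-x^2) * (1-2*x)^2) < 20 * (1+x) * (3-x) := by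
      nlinarith [mul_pos hx0 (show (0:ℝ) < 3 - x by linarith),
        mul_pos (mul_pos hx0 (show (0:ℝ) < 3 - x by linarith))
          (show (0:ℝ) < 24 - 15*x - 8*x^2 + 4*x^3 by nlinarith)]
    linarith
  unfold H
  rw [e1, e2, e3]
  nlinarith [hA, hB]

theorem abs_H_gt (k : ℕ) (hk : 3 ≤ k) (x : ℝ) (hx : x ∈ Set.Ioc (0 : ℝ) (1/2)) :
    |H x k| > (1 / ((2*(k:ℝ) + 1) * (2*(k:ℝ) + 2))) * |H x (k+1)| := by
  obtain ⟨hx0, hx1⟩ := hx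
  have h1 := H_neg k hk x hx0 hx1
  have h2 := H_neg (k+1) (by omega) x hx0 hx1
  have h3 := H_key k hk x hx0 hx1
  have hkr : (3:ℝ) ≤ (k:ℝ) := by exact_mod_cast hk
  have hd : (0:ℝ) < (2*(k:ℝ) + 1) * (2*(k:ℝ) + 2) := by nlinarith
  rw [abs_of_neg h1, abs_of_neg h2]
  rw [gt_iff_lt, div_mul_eq_mul_div, div_lt_iff₀ hd]
  nlinarith [mul_nonneg (show (0:ℝ) ≤ (2*(k:ℝ)+1)*(2*(k:ℝ)+2) - 21 by nlinarith)
    (show (0:ℝ) ≤ -H x k by linarith)]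
end

section
/- Let T ≥ 1 be a natural number and let a, b be real numbers such that the complex polynomial map F(z) = z + a·z^{T+1} + b·z^{2T+1} is injective on the open unit disk {z ∈ ℂ : |z| < 1}. Then |1 - a + b| ≥ ((1 - sin(π/(2+2T)))/cos(π/(2+2T)))^2 · |1 + a + b|; equivalently, |F(e^{iπ/T})| ≥ ((1 - sin(π/(2+2T)))/cos(π/(2+2T)))^2 · |F(1)|. -/
open Real Set ComplexConjugate

/-
Write `F = F_{a,b}`. Since `F` has real coefficients, `F (conj z) = conj (F z)`, so by
injectivity `F` takes real values only at real points: for `0 < r < 1` the function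
`α ↦ Im F(r e^{iα}) / r = sin α + a r^T sin((T+1)α) + b r^{2T} sin((2T+1)α)`
has no zero on `(0, π)`. Its integral against `sin α` over `(0, π)` is `π/2 > 0`, so it is
positive on `(0, π)`. At `θ = π/(2T+2)` this reads `(1 + b r^{2T}) sin θ + a r^T > 0`, and
`r → 1` gives `a ≥ -(1+b) sin θ`. As `u = e^{iπ/T}` satisfies `F_{a,b}(u w) = u F_{-a,b}(w)`,
the same holds for `-a`, so `|a| ≤ (1+b) sin θ`, which rearranges to the claim because
`((1 - sin θ)/cos θ)^2 = (1 - sin θ)/(1 + sin θ)`.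
-/

lemma integral_cos_int_mul {m : ℤ} (hm : m ≠ 0) : ∫ x in (0 : ℝ)..π, cos (m * x) = 0 := by
  rw [intervalIntegral.integral_comp_mul_left (fun x => cos x) (Int.cast_ne_zero.mpr hm)]
  simp [sin_int_mul_pi]

lemma integral_sin_nat_mul_mul_sin {k : ℕ} (hk : k ≠ 1) :
    ∫ x in (0 : ℝ)..π, sin (k * x) * sin x = 0 := by
  have hprod : ∀ x : ℝ, sin (k * x) * sin x
      = (cos (((k - 1 : ℤ) : ℝ) * x) - cos (((k + 1 : ℤ) : ℝ) * x)) / 2 := by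
    intro x
    push_cast
    rw [sub_mul, add_mul, one_mul, cos_sub, cos_add]
    ring
  simp only [hprod]
  rw [intervalIntegral.integral_div,
    intervalIntegral.integral_sub (by apply Continuous.intervalIntegrable; fun_prop)
      (by apply Continuous.intervalIntegrable; fun_prop),
    integral_cos_int_mul (by omega), integral_cos_int_mul (by omega)]
  norm_num

lemma IsPreconnected.pos_of_ne_zero {s : Set ℝ} (hs : IsPreconnected s) {f : ℝ → ℝ}
    (hf : ContinuousOn f s) (hne : ∀ x ∈ s, f x ≠ 0) {x₀ : ℝ} (hx₀ : x₀ ∈ s)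
    (hpos : 0 < f x₀) {x : ℝ} (hx : x ∈ s) : 0 < f x := by
  by_contra! hle
  obtain ⟨c, hc, hfc⟩ := hs.intermediate_value hx hx₀ hf ⟨hle, hpos.le⟩
  exact hne c hc hfc

lemma im_eq_zero_of_injOn_of_map_conj {f : ℂ → ℂ} {s : Set ℂ} (hf : InjOn f s)
    (hconj : ∀ z, f (conj z) = conj (f z)) {z : ℂ} (hz : z ∈ s) (hz' : conj z ∈ s)
    (hfz : (f z).im = 0) : z.im = 0 := by
  have : conj z = z := hf hz' hz (by rw [hconj, Complex.conj_eq_iff_im.mpr hfz])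
  exact Complex.conj_eq_iff_im.mp this

lemma sq_one_sub_sin_div_cos {x : ℝ} (hx : cos x ≠ 0) :
    ((1 - sin x) / cos x) ^ 2 = (1 - sin x) / (1 + sin x) := by
  have hsin : 1 + sin x ≠ 0 := fun h => hx (by nlinarith [sin_sq_add_cos_sq x, sq_nonneg (cos x)])
  rw [div_pow, div_eq_div_iff (pow_ne_zero 2 hx) hsin, cos_sq']
  ring

lemma exp_I_mul_pi_div_pow {T : ℕ} (hT : T ≠ 0) :
    Complex.exp (Complex.I * π / T) ^ T = -1 := by
  rw [← Complex.exp_nat_mul, mul_div_cancel₀ _ (Nat.cast_ne_zero.mpr hT), mul_comm,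
    Complex.exp_pi_mul_I]

lemma norm_exp_I_mul_pi_div (T : ℕ) : ‖Complex.exp (Complex.I * π / T)‖ = 1 := by
  simp [Complex.norm_exp, Complex.div_re]

noncomputable def sinTrinomial (T : ℕ) (a b α : ℝ) : ℝ :=
  sin α + a * sin ((T + 1) * α) + b * sin ((2 * T + 1) * α)

lemma integral_sinTrinomial_mul_sin {T : ℕ} (hT : T ≠ 0) (a b : ℝ) :
    ∫ x in (0 : ℝ)..π, sinTrinomial T a b x * sin x = π / 2 := by
  have h₁ := integral_sin_nat_mul_mul_sin (k := T + 1) (by omega)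
  have h₂ := integral_sin_nat_mul_mul_sin (k := 2 * T + 1) (by omega)
  push_cast at h₁ h₂
  have hsplit : (fun x => sinTrinomial T a b x * sin x) = fun x =>
      sin x ^ 2 + (a * (sin ((T + 1) * x) * sin x) + b * (sin ((2 * T + 1) * x) * sin x)) := by
    funext x
    simp only [sinTrinomial]
    ring
  rw [hsplit,
    intervalIntegral.integral_add (by apply Continuous.intervalIntegrable; fun_prop)
      (by apply Continuous.intervalIntegrable; fun_prop),
    intervalIntegral.integral_add (by apply Continuous.intervalIntegrable; fun_prop)
      (by apply Continuous.intervalIntegrable; fun_prop),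
    intervalIntegral.integral_const_mul, intervalIntegral.integral_const_mul, h₁, h₂,
    integral_sin_sq]
  simp

lemma exists_sinTrinomial_pos {T : ℕ} (hT : T ≠ 0) (a b : ℝ) :
    ∃ α ∈ Ioo 0 π, 0 < sinTrinomial T a b α := by
  by_contra! hle
  have hnonpos :
      ∫ x in (0 : ℝ)..π, sinTrinomial T a b x * sin x ≤ ∫ _ in (0 : ℝ)..π, 0 := by
    refine intervalIntegral.integral_mono_on pi_pos.le
      (by apply Continuous.intervalIntegrable; unfold sinTrinomial; fun_prop) (by simp)
      fun x hx => ?_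
    rcases eq_endpoints_or_mem_Ioo_of_mem_Icc hx with rfl | rfl | hx
    · simp
    · simp
    · exact mul_nonpos_of_nonpos_of_nonneg (hle x hx) (sin_pos_of_pos_of_lt_pi hx.1 hx.2).le
  rw [integral_sinTrinomial_mul_sin hT, intervalIntegral.integral_zero] at hnonpos
  linarith [pi_pos]

lemma pi_div_two_add_two_mul_mem_Ioo {T : ℕ} (hT : T ≠ 0) :
    π / (2 + 2 * T) ∈ Ioo 0 (π / 2) := by
  have : (1 : ℝ) ≤ T := Nat.one_le_cast.mpr (Nat.one_le_iff_ne_zero.mpr hT)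
  exact ⟨by positivity, div_lt_div_of_pos_left pi_pos two_pos (by linarith)⟩

lemma sinTrinomial_pi_div (T : ℕ) (a b : ℝ) :
    sinTrinomial T a b (π / (2 + 2 * T)) = (1 + b) * sin (π / (2 + 2 * T)) + a := by
  have hden : (2 + 2 * T : ℝ) ≠ 0 := by positivity
  have h₁ : (T + 1) * (π / (2 + 2 * T)) = π / 2 := by field_simp; ring
  have h₂ : (2 * T + 1) * (π / (2 + 2 * T)) = π - π / (2 + 2 * T) := by field_simp; ring
  rw [sinTrinomial, h₁, h₂, sin_pi_div_two, sin_pi_sub]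
  ring

noncomputable def trinomial (T : ℕ) (a b : ℝ) (z : ℂ) : ℂ :=
  z + a * z ^ (T + 1) + b * z ^ (2 * T + 1)

lemma trinomial_conj (T : ℕ) (a b : ℝ) (z : ℂ) :
    trinomial T a b (conj z) = conj (trinomial T a b z) := by
  simp [trinomial]

lemma im_trinomial_ofReal_mul_exp (T : ℕ) (a b r α : ℝ) :
    (trinomial T a b (r * Complex.exp (α * Complex.I))).im
      = r * sinTrinomial T (a * r ^ T) (b * r ^ (2 * T)) α := by
  have hpow : ∀ k : ℕ, ((r : ℂ) * Complex.exp (α * Complex.I)) ^ k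
      = ((r ^ k : ℝ) : ℂ) * Complex.exp (((k * α : ℝ)) * Complex.I) := by
    intro k
    rw [mul_pow, ← Complex.exp_nat_mul]
    push_cast
    ring_nf
  simp only [trinomial, hpow, Complex.add_im, Complex.mul_im, Complex.ofReal_re,
    Complex.ofReal_im, Complex.exp_ofReal_mul_I_im, Complex.exp_ofReal_mul_I_re, sinTrinomial]
  push_cast
  ring

lemma trinomial_one (T : ℕ) (a b : ℝ) : trinomial T a b 1 = ((1 + a + b : ℝ) : ℂ) := by
  simp [trinomial]

lemma trinomial_mul_of_pow_eq_neg_one {T : ℕ} (a b : ℝ) {u : ℂ} (hu : u ^ T = -1) (w : ℂ) :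
    trinomial T a b (u * w) = u * trinomial T (-a) b w := by
  have h₁ : u ^ (T + 1) = -u := by rw [pow_succ, hu, neg_one_mul]
  have h₂ : u ^ (2 * T + 1) = u := by rw [pow_succ, pow_mul', hu]; ring
  simp only [trinomial, mul_pow, h₁, h₂]
  push_cast
  ring

lemma sinTrinomial_ne_zero_of_injOn {T : ℕ} {a b : ℝ}
    (hinj : InjOn (trinomial T a b) (Metric.ball 0 1)) {r : ℝ} (hr : r ∈ Ioo 0 1) {α : ℝ}
    (hα : α ∈ Ioo 0 π) : sinTrinomial T (a * r ^ T) (b * r ^ (2 * T)) α ≠ 0 := by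
  intro hzero
  set z : ℂ := r * Complex.exp (α * Complex.I)
  have hnorm : ‖z‖ < 1 := by
    simpa [z, Complex.norm_exp, abs_of_pos hr.1] using hr.2
  have him := im_eq_zero_of_injOn_of_map_conj hinj (trinomial_conj T a b)
    (mem_ball_zero_iff.mpr hnorm) (by simpa using hnorm)
    (by rw [im_trinomial_ofReal_mul_exp, hzero, mul_zero])
  have hzim : z.im = r * sin α := by simp [z, Complex.mul_im, Complex.exp_ofReal_mul_I_im]
  exact (mul_pos hr.1 (sin_pos_of_pos_of_lt_pi hα.1 hα.2)).ne' (hzim ▸ him)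

lemma sinTrinomial_pos_of_injOn {T : ℕ} {a b : ℝ}
    (hinj : InjOn (trinomial T a b) (Metric.ball 0 1)) (hT : T ≠ 0) {r : ℝ} (hr : r ∈ Ioo 0 1)
    {α : ℝ} (hα : α ∈ Ioo 0 π) : 0 < sinTrinomial T (a * r ^ T) (b * r ^ (2 * T)) α := by
  obtain ⟨α₀, hα₀, hpos⟩ := exists_sinTrinomial_pos hT (a * r ^ T) (b * r ^ (2 * T))
  exact isPreconnected_Ioo.pos_of_ne_zero (by unfold sinTrinomial; fun_prop)
    (fun x hx => sinTrinomial_ne_zero_of_injOn hinj hr hx) hα₀ hpos hα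

lemma neg_le_of_injOn {T : ℕ} {a b : ℝ} (hinj : InjOn (trinomial T a b) (Metric.ball 0 1))
    (hT : T ≠ 0) : -((1 + b) * sin (π / (2 + 2 * T))) ≤ a := by
  set s := sin (π / (2 + 2 * T))
  have hθ : π / (2 + 2 * T) ∈ Ioo 0 π :=
    Ioo_subset_Ioo_right (half_le_self pi_pos.le) (pi_div_two_add_two_mul_mem_Ioo hT)
  have hpos : ∀ r ∈ Ioo (0 : ℝ) 1, 0 < (1 + b * r ^ (2 * T)) * s + a * r ^ T := fun r hr => by
    simpa [sinTrinomial_pi_div] using sinTrinomial_pos_of_injOn hinj hT hr hθ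
  have hclosed : IsClosed {r : ℝ | 0 ≤ (1 + b * r ^ (2 * T)) * s + a * r ^ T} :=
    isClosed_le continuous_const (by fun_prop)
  have hIcc := closure_minimal (fun r hr => (hpos r hr).le) hclosed
  rw [closure_Ioo zero_ne_one] at hIcc
  have hone : 0 ≤ (1 + b * 1 ^ (2 * T)) * s + a * 1 ^ T := hIcc (right_mem_Icc.mpr zero_le_one)
  simp only [one_pow, mul_one] at hone
  linarith

lemma injOn_trinomial_neg {T : ℕ} {a b : ℝ} (hinj : InjOn (trinomial T a b) (Metric.ball 0 1))
    (hT : T ≠ 0) : InjOn (trinomial T (-a) b) (Metric.ball 0 1) := by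
  set u := Complex.exp (Complex.I * π / T)
  have hu : ‖u‖ = 1 := norm_exp_I_mul_pi_div T
  have hpow : u ^ T = -1 := exp_I_mul_pi_div_pow hT
  have hmaps : MapsTo (u * ·) (Metric.ball (0 : ℂ) 1) (Metric.ball 0 1) := fun w hw => by
    simpa [hu] using hw
  intro w₁ hw₁ w₂ hw₂ heq
  refine mul_left_cancel₀ (norm_ne_zero_iff.mp (hu ▸ one_ne_zero))
    (hinj (hmaps hw₁) (hmaps hw₂) ?_)
  simp only [trinomial_mul_of_pow_eq_neg_one a b hpow, heq]

lemma abs_le_of_injOn {T : ℕ} {a b : ℝ} (hinj : InjOn (trinomial T a b) (Metric.ball 0 1))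
    (hT : T ≠ 0) : |a| ≤ (1 + b) * sin (π / (2 + 2 * T)) :=
  abs_le.mpr ⟨neg_le_of_injOn hinj hT,
    neg_le_neg_iff.mp (neg_le_of_injOn (injOn_trinomial_neg hinj hT) hT)⟩

lemma one_sub_mul_abs_le {a b s : ℝ} (hs₀ : 0 < s) (hs₁ : s ≤ 1) (ha : |a| ≤ (1 + b) * s) :
    (1 - s) * |1 + a + b| ≤ (1 + s) * |1 - a + b| := by
  obtain ⟨ha₁, ha₂⟩ := abs_le.mp ha
  have hb : 0 ≤ 1 + b := nonneg_of_mul_nonneg_left (le_trans (abs_nonneg a) ha) hs₀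
  rw [abs_of_nonneg (by nlinarith), abs_of_nonneg (by nlinarith)]
  nlinarith

theorem contraction_bound_of_injOn (T : ℕ) (hT : 1 ≤ T) (a b : ℝ)
    (hinj : Set.InjOn (fun z : ℂ => z + (a : ℂ) * z^(T+1) + (b : ℂ) * z^(2*T+1))
      (Metric.ball (0 : ℂ) 1)) :
    |1 - a + b| ≥ ((1 - Real.sin (π / (2 + 2*(T:ℝ)))) / Real.cos (π / (2 + 2*(T:ℝ))))^2
        * |1 + a + b| ∧
    ‖(fun z : ℂ => z + (a : ℂ) * z^(T+1) + (b : ℂ) * z^(2*T+1))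
        (Complex.exp (Complex.I * π / (T:ℂ)))‖
      ≥ ((1 - Real.sin (π / (2 + 2*(T:ℝ)))) / Real.cos (π / (2 + 2*(T:ℝ))))^2
        * ‖(fun z : ℂ => z + (a : ℂ) * z^(T+1) + (b : ℂ) * z^(2*T+1)) 1‖ := by
  have hT₀ : T ≠ 0 := Nat.one_le_iff_ne_zero.mp hT
  set θ := π / (2 + 2 * (T : ℝ))
  have hθ : θ ∈ Ioo 0 (π / 2) := pi_div_two_add_two_mul_mem_Ioo hT₀
  have hsin : 0 < sin θ := sin_pos_of_pos_of_lt_pi hθ.1 (hθ.2.trans (half_lt_self pi_pos))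
  have hcos : 0 < cos θ := cos_pos_of_mem_Ioo ⟨by linarith [hθ.1, pi_pos], hθ.2⟩
  have hmain : |1 - a + b| ≥ ((1 - sin θ) / cos θ) ^ 2 * |1 + a + b| := by
    rw [sq_one_sub_sin_div_cos hcos.ne', ge_iff_le, div_mul_eq_mul_div,
      div_le_iff₀ (by linarith), mul_comm |1 - a + b|]
    exact one_sub_mul_abs_le hsin (sin_le_one θ) (abs_le_of_injOn hinj hT₀)
  refine ⟨hmain, ?_⟩
  have hrot := trinomial_mul_of_pow_eq_neg_one a b (exp_I_mul_pi_div_pow hT₀) 1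
  rw [mul_one] at hrot
  change ‖trinomial T a b _‖ ≥ _ * ‖trinomial T a b 1‖
  rw [hrot, norm_mul, norm_exp_I_mul_pi_div, one_mul, trinomial_one, trinomial_one,
    Complex.norm_real, Complex.norm_real, Real.norm_eq_abs, Real.norm_eq_abs, ← sub_eq_add_neg]
  exact hmain
end
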